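/- Under the stated drift hypotheses, for every M ∈ ℝ one has liminf_{n→∞} P(X_n < M) ≥ p₀(M), where p₀(M) := 1 − (D e^{η(K − M)})/(1 − ρ); equivalently, limsup_{n→∞} P(X_n ≥ M) ≤ (D e^{η(K − M)})/(1 − ρ). -/

import Mathlib

/-!
The Lyapunov function is `exp (η X n)`. For `|y| ≤ k` and `η ≤ λ`, comparing power series gives
`exp (η y) ≤ 1 + η y + c η²`, so on `{K ≤ X n}` the drift yields
`E[exp (η (X (n+1) - X n)) | ℱ n] ≤ 1 - η ε + c η² ≤ ρ`; below `K` the same factor is at most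
`D` while `exp (η X n) ≤ exp (η K)`. Hence `m n := E[exp (η X n)]` obeys
`m (n+1) ≤ ρ m n + D exp (η K)`, so `m n ≤ L + ρⁿ (m 0 - L)` with `L = D exp (η K) / (1 - ρ)`,
and Chernoff's bound `P(M ≤ X n) ≤ exp (-η M) m n` gives the limsup and, by complement, the liminf.
-/

open MeasureTheory Filter Topology Nat

namespace Real

lemma hasSum_exp_sub_one_sub (x : ℝ) :
    HasSum (fun n : ℕ => x ^ (n + 2) / (n + 2)!) (exp x - 1 - x) := by
  have h := (hasSum_nat_add_iff' 2).mpr (exp_eq_exp_ℝ ▸ NormedSpace.expSeries_div_hasSum_exp x)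
  simpa [Finset.sum_range_succ, sub_sub] using h

lemma exp_sub_one_sub_le_sq_mul {x s θ : ℝ} (hs : 0 ≤ s) (hθ0 : 0 ≤ θ) (hθ1 : θ ≤ 1)
    (hx : |x| ≤ θ * s) :
    exp x - 1 - x ≤ θ ^ 2 * (exp s - 1 - s) := by
  refine hasSum_le (fun n => ?_) (hasSum_exp_sub_one_sub x)
    ((hasSum_exp_sub_one_sub s).mul_left (θ ^ 2))
  rw [mul_div_assoc']
  gcongr
  calc x ^ (n + 2) ≤ |x| ^ (n + 2) := le_abs_self _ |>.trans (abs_pow x _).le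
    _ ≤ (θ * s) ^ (n + 2) := by gcongr
    _ = θ ^ 2 * (θ ^ n * s ^ (n + 2)) := by ring
    _ ≤ θ ^ 2 * s ^ (n + 2) := by
        gcongr
        exact mul_le_of_le_one_left (by positivity) (pow_le_one₀ hθ0 hθ1)

lemma exp_mul_le_one_add_mul_add_sq {η l k y : ℝ} (hη : 0 < η) (hηl : η ≤ l) (hy : |y| ≤ k) :
    exp (η * y) ≤ 1 + η * y + (exp (l * k) - 1 - l * k) / l ^ 2 * η ^ 2 := by
  have hl : 0 < l := hη.trans_le hηl
  have hηy : |η * y| ≤ η / l * (l * k) := by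
    rw [abs_mul, abs_of_pos hη, div_mul_comm, mul_div_cancel_left₀ _ hl.ne', mul_comm k]
    exact mul_le_mul_of_nonneg_left hy hη.le
  have h := exp_sub_one_sub_le_sq_mul (mul_nonneg hl.le ((abs_nonneg y).trans hy))
    (div_nonneg hη.le hl.le) ((div_le_one hl).mpr hηl) hηy
  calc exp (η * y) = 1 + η * y + (exp (η * y) - 1 - η * y) := by ring
    _ ≤ 1 + η * y + (η / l) ^ 2 * (exp (l * k) - 1 - l * k) := by gcongr
    _ = 1 + η * y + (exp (l * k) - 1 - l * k) / l ^ 2 * η ^ 2 := by ring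

end Real

open Real ProbabilityTheory

section CondExp

variable {Ω : Type*} {m m0 : MeasurableSpace Ω} {μ : Measure Ω} {Z : Ω → ℝ} {k η : ℝ}

lemma integrable_exp_mul_of_abs_le [IsFiniteMeasure μ] (hZ : AEStronglyMeasurable Z μ)
    (hZk : ∀ᵐ ω ∂μ, |Z ω| ≤ k) (hη : 0 ≤ η) : Integrable (fun ω => exp (η * Z ω)) μ := by
  refine Integrable.of_bound (continuous_exp.comp_aestronglyMeasurable (hZ.const_mul η))
    (exp (η * k)) ?_
  filter_upwards [hZk] with ω h
  rw [Real.norm_of_nonneg (exp_pos _).le, exp_le_exp]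
  exact mul_le_mul_of_nonneg_left ((le_abs_self _).trans h) hη

lemma condExp_exp_mul_le_exp [IsFiniteMeasure μ] (hm : m ≤ m0) (hZ : AEStronglyMeasurable Z μ)
    (hZk : ∀ᵐ ω ∂μ, |Z ω| ≤ k) (hη : 0 ≤ η) :
    μ[fun ω => exp (η * Z ω) | m] ≤ᵐ[μ] fun _ => exp (η * k) := by
  have h := condExp_mono (m := m) (integrable_exp_mul_of_abs_le hZ hZk hη)
    (integrable_const (exp (η * k))) (by
      filter_upwards [hZk] with ω h
      exact exp_le_exp.mpr (mul_le_mul_of_nonneg_left ((le_abs_self _).trans h) hη))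
  rwa [condExp_const hm] at h

lemma condExp_exp_mul_le_one_add [IsFiniteMeasure μ] (hm : m ≤ m0)
    (hZ : AEStronglyMeasurable Z μ) (hZk : ∀ᵐ ω ∂μ, |Z ω| ≤ k) {l : ℝ} (hη : 0 < η)
    (hηl : η ≤ l) :
    μ[fun ω => exp (η * Z ω) | m] ≤ᵐ[μ]
      fun ω => 1 + η * μ[Z | m] ω + (exp (l * k) - 1 - l * k) / l ^ 2 * η ^ 2 := by
  set q := (exp (l * k) - 1 - l * k) / l ^ 2 * η ^ 2
  have hZi : Integrable Z μ := Integrable.of_bound hZ k (by simpa only [Real.norm_eq_abs])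
  have hmono := condExp_mono (m := m) (integrable_exp_mul_of_abs_le hZ hZk hη.le)
    ((integrable_const (1 + q)).add (hZi.smul η)) (by
      filter_upwards [hZk] with ω h
      have := exp_mul_le_one_add_mul_add_sq hη hηl h
      simp only [Pi.add_apply, Pi.smul_apply, smul_eq_mul]
      linarith)
  filter_upwards [hmono, condExp_add (integrable_const (1 + q)) (hZi.smul η) m,
    condExp_smul η Z m] with ω h hadd hsmul
  rw [hadd] at h
  simp only [Pi.add_apply, Pi.smul_apply, smul_eq_mul, condExp_const hm] at h hsmul
  rw [hsmul] at h
  linarith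

lemma integral_mul_le_of_condExp_le [IsProbabilityMeasure μ] (hm : m ≤ m0) {Y : Ω → ℝ}
    (hYm : StronglyMeasurable[m] Y) (hY0 : 0 ≤ Y) (hY : Integrable Y μ) (hZ : Integrable Z μ)
    (hYZ : Integrable (Y * Z) μ) {ρ D B : ℝ} (hρ : 0 ≤ ρ) (hD : 0 ≤ D) (hB : 0 ≤ B)
    (hZD : μ[Z | m] ≤ᵐ[μ] fun _ => D) (hZρ : ∀ᵐ ω ∂μ, Y ω ≤ B ∨ μ[Z | m] ω ≤ ρ) :
    ∫ ω, (Y * Z) ω ∂μ ≤ ρ * ∫ ω, Y ω ∂μ + D * B := by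
  have hpull := condExp_mul_of_stronglyMeasurable_left hYm hYZ hZ
  calc ∫ ω, (Y * Z) ω ∂μ = ∫ ω, (Y * μ[Z | m]) ω ∂μ := by
        rw [← integral_condExp hm]; exact integral_congr_ae hpull
    _ ≤ ∫ ω, (ρ * Y ω + D * B) ∂μ := by
        refine integral_mono_ae (integrable_condExp.congr hpull)
          ((hY.const_mul ρ).add (integrable_const _)) ?_
        filter_upwards [hZD, hZρ] with ω hω hcase
        have hYω : 0 ≤ Y ω := hY0 ω
        simp only [Pi.mul_apply]
        rcases hcase with hsmall | hρω
        · nlinarith [mul_le_mul_of_nonneg_left hω hYω]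
        · nlinarith [mul_le_mul_of_nonneg_left hρω hYω]
    _ = ρ * ∫ ω, Y ω ∂μ + D * B := by
        rw [integral_add (hY.const_mul ρ) (integrable_const _), integral_const_mul,
          integral_const, probReal_univ, one_smul]

end CondExp

lemma le_add_pow_mul_of_le_mul_add {a : ℕ → ℝ} {ρ B : ℝ} (hρ0 : 0 ≤ ρ) (hρ1 : ρ ≠ 1)
    (h : ∀ n, a (n + 1) ≤ ρ * a n + B) (n : ℕ) :
    a n ≤ B / (1 - ρ) + ρ ^ n * (a 0 - B / (1 - ρ)) := by
  have hfix : ρ * (B / (1 - ρ)) + B = B / (1 - ρ) := by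
    field_simp [sub_ne_zero.mpr hρ1.symm]; ring
  induction n with
  | zero => simp
  | succ n ih =>
    calc a (n + 1) ≤ ρ * a n + B := h n
      _ ≤ ρ * (B / (1 - ρ) + ρ ^ n * (a 0 - B / (1 - ρ))) + B := by gcongr
      _ = B / (1 - ρ) + ρ ^ (n + 1) * (a 0 - B / (1 - ρ)) := by linear_combination hfix

lemma limsup_le_of_le_of_tendsto {f g : ℕ → ℝ} {L : ℝ} (hf : BddBelow (Set.range f))
    (hfg : ∀ n, f n ≤ g n) (hg : Tendsto g atTop (𝓝 L)) : limsup f atTop ≤ L :=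
  hg.limsup_eq ▸ limsup_le_limsup (.of_forall hfg) hf.isBoundedUnder_of_range.isCoboundedUnder_le
    hg.isBoundedUnder_le

lemma le_liminf_of_le_of_tendsto {f g : ℕ → ℝ} {L : ℝ} (hf : BddAbove (Set.range f))
    (hgf : ∀ n, g n ≤ f n) (hg : Tendsto g atTop (𝓝 L)) : L ≤ liminf f atTop :=
  hg.liminf_eq ▸ liminf_le_liminf (.of_forall hgf) hg.isBoundedUnder_ge
    hf.isBoundedUnder_of_range.isCoboundedUnder_ge

section ExponentialMoment

variable {Ω : Type*} {m0 : MeasurableSpace Ω} {μ : Measure Ω} {ℱ : Filtration ℕ m0}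
  {X : ℕ → Ω → ℝ} {x0 k η : ℝ}

lemma ae_le_add_mul_of_abs_sub_le (hX0 : ∀ᵐ ω ∂μ, X 0 ω = x0)
    (hbdd : ∀ n, ∀ᵐ ω ∂μ, |X (n + 1) ω - X n ω| ≤ k) (n : ℕ) :
    ∀ᵐ ω ∂μ, X n ω ≤ x0 + n * k := by
  induction n with
  | zero => filter_upwards [hX0] with ω h; simp [h]
  | succ n ih =>
    filter_upwards [ih, hbdd n] with ω hn hstep
    push_cast
    linarith [(abs_le.mp hstep).2]

lemma integrable_exp_mul_of_bounded_increments [IsFiniteMeasure μ]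
    (hX : ∀ n, AEStronglyMeasurable (X n) μ) (hX0 : ∀ᵐ ω ∂μ, X 0 ω = x0)
    (hbdd : ∀ n, ∀ᵐ ω ∂μ, |X (n + 1) ω - X n ω| ≤ k) (hη : 0 ≤ η) (n : ℕ) :
    Integrable (fun ω => exp (η * X n ω)) μ := by
  refine Integrable.of_bound (continuous_exp.comp_aestronglyMeasurable ((hX n).const_mul η))
    (exp (η * (x0 + n * k))) ?_
  filter_upwards [ae_le_add_mul_of_abs_sub_le hX0 hbdd n] with ω h
  rw [Real.norm_of_nonneg (exp_pos _).le, exp_le_exp]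
  exact mul_le_mul_of_nonneg_left h hη

lemma mgf_succ_le [IsProbabilityMeasure μ] (hadp : Adapted ℱ X) (hX0 : ∀ᵐ ω ∂μ, X 0 ω = x0)
    (hbdd : ∀ n, ∀ᵐ ω ∂μ, |X (n + 1) ω - X n ω| ≤ k) {ρ D K : ℝ} (hη : 0 ≤ η) (hρ : 0 ≤ ρ)
    (hD : exp (η * k) ≤ D)
    (hstep : ∀ n, ∀ᵐ ω ∂μ, K ≤ X n ω →
      μ[fun ω => exp (η * (X (n + 1) ω - X n ω)) | ℱ n] ω ≤ ρ) (n : ℕ) :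
    mgf (X (n + 1)) μ η ≤ ρ * mgf (X n) μ η + D * exp (η * K) := by
  have hX : ∀ n, AEStronglyMeasurable (X n) μ := fun n =>
    ((hadp n).mono (ℱ.le n) le_rfl).aestronglyMeasurable
  have hΔ : AEStronglyMeasurable (fun ω => X (n + 1) ω - X n ω) μ := (hX (n + 1)).sub (hX n)
  have hprod : ((fun ω => exp (η * X n ω)) * fun ω => exp (η * (X (n + 1) ω - X n ω)))
      = fun ω => exp (η * X (n + 1) ω) := by
    funext ω; rw [Pi.mul_apply, ← exp_add]; ring_nf
  have hint := integrable_exp_mul_of_bounded_increments hX hX0 hbdd hη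
  rw [mgf, mgf, ← hprod]
  refine integral_mul_le_of_condExp_le (ℱ.le n)
    (((hadp n).const_mul η).exp.stronglyMeasurable) (fun ω => (exp_pos _).le) (hint n)
    (integrable_exp_mul_of_abs_le hΔ (hbdd n) hη) (hprod ▸ hint (n + 1)) hρ
    ((exp_pos _).le.trans hD) (exp_pos _).le ?_ ?_
  · filter_upwards [condExp_exp_mul_le_exp (ℱ.le n) hΔ (hbdd n) hη] with ω h
    exact h.trans hD
  · filter_upwards [hstep n] with ω h
    rcases le_or_gt K (X n ω) with hK | hK
    · exact .inr (h hK)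
    · exact .inl (exp_le_exp.mpr (mul_le_mul_of_nonneg_left hK.le hη))

lemma condExp_exp_mul_increment_le_of_drift [IsFiniteMeasure μ] (hadp : Adapted ℱ X)
    (hbdd : ∀ n, ∀ᵐ ω ∂μ, |X (n + 1) ω - X n ω| ≤ k) {ε K l : ℝ}
    (hdrift : ∀ n, ∀ᵐ ω ∂μ, K ≤ X n ω → μ[fun ω' => X (n + 1) ω' - X n ω' | ℱ n] ω ≤ -ε)
    (hη : 0 < η) (hηl : η ≤ l) (hηc : (exp (l * k) - 1 - l * k) / l ^ 2 * η ≤ ε / 2)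
    (n : ℕ) :
    ∀ᵐ ω ∂μ, K ≤ X n ω →
      μ[fun ω => exp (η * (X (n + 1) ω - X n ω)) | ℱ n] ω ≤ 1 - η * ε / 2 := by
  have hX : ∀ n, Measurable (X n) := fun n => (hadp n).mono (ℱ.le n) le_rfl
  filter_upwards [condExp_exp_mul_le_one_add (Z := fun ω => X (n + 1) ω - X n ω) (ℱ.le n)
    ((hX (n + 1)).sub (hX n)).aestronglyMeasurable (hbdd n) hη hηl, hdrift n]
    with ω hexp hΔ hK
  nlinarith [hΔ hK]

lemma liminf_limsup_bounds_of_mgf_le [IsProbabilityMeasure μ] (hX : ∀ n, Measurable (X n))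
    (hint : ∀ n, Integrable (fun ω => exp (η * X n ω)) μ) (hη : 0 ≤ η) {L C ρ : ℝ}
    (hρ0 : 0 ≤ ρ) (hρ1 : ρ < 1) (hmgf : ∀ n, mgf (X n) μ η ≤ L + ρ ^ n * C) (M : ℝ) :
    1 - exp (-η * M) * L ≤ liminf (fun n => μ.real {ω | X n ω < M}) atTop ∧
      limsup (fun n => μ.real {ω | M ≤ X n ω}) atTop ≤ exp (-η * M) * L := by
  have htail : ∀ n, μ.real {ω | M ≤ X n ω} ≤ exp (-η * M) * (L + ρ ^ n * C) := fun n =>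
    (measure_ge_le_exp_mul_mgf M hη (hint n)).trans
      (mul_le_mul_of_nonneg_left (hmgf n) (exp_pos _).le)
  have hlim : Tendsto (fun n => exp (-η * M) * (L + ρ ^ n * C)) atTop (𝓝 (exp (-η * M) * L)) := by
    simpa using (((tendsto_pow_atTop_nhds_zero_of_lt_one hρ0 hρ1).mul_const C).const_add
      L).const_mul (exp (-η * M))
  refine ⟨le_liminf_of_le_of_tendsto ⟨1, ?_⟩ (fun n => ?_) (hlim.const_sub 1),
    limsup_le_of_le_of_tendsto ⟨0, ?_⟩ htail hlim⟩
  · rintro _ ⟨n, rfl⟩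
    exact measureReal_le_one
  · have hcompl : {ω | X n ω < M} = {ω | M ≤ X n ω}ᶜ := by ext; simp
    rw [hcompl, probReal_compl_eq_one_sub (measurableSet_le measurable_const (hX n))]
    linarith [htail n]
  · rintro _ ⟨n, rfl⟩
    exact measureReal_nonneg

end ExponentialMoment

theorem stmt_6_general
    {Ω : Type*} {m0 : MeasurableSpace Ω} {μ : Measure Ω} [IsProbabilityMeasure μ]
    (ℱ : Filtration ℕ m0) (X : ℕ → Ω → ℝ) (hadp : Adapted ℱ X)
    (x0 : ℝ) (hX0 : ∀ᵐ ω ∂μ, X 0 ω = x0)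
    (k ε K : ℝ) (hε0 : 0 < ε) (hεk : ε ≤ k)
    (hbdd : ∀ n : ℕ, ∀ᵐ ω ∂μ, |X (n + 1) ω - X n ω| ≤ k)
    (hdrift : ∀ n : ℕ, ∀ᵐ ω ∂μ, K ≤ X n ω →
      (μ[(fun ω' => X (n + 1) ω' - X n ω') | ℱ n]) ω ≤ -ε)
    (lam : ℝ)
    (c η ρ D : ℝ)
    (hc : c = (Real.exp (lam * k) - 1 - lam * k) / lam ^ 2)
    (hη0 : 0 < η) (hηlt : η < min lam (ε / (2 * c)))
    (hρ : ρ = 1 - η * ε / 2)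
    (hD : D = Real.exp (lam * k)) :
    ∀ M : ℝ,
      (1 - D * Real.exp (η * (K - M)) / (1 - ρ) ≤
        Filter.liminf (fun n => (μ {ω | X n ω < M}).toReal) Filter.atTop) ∧
      (Filter.limsup (fun n => (μ {ω | M ≤ X n ω}).toReal) Filter.atTop ≤
        D * Real.exp (η * (K - M)) / (1 - ρ)) := by
  intro M
  obtain ⟨hηlam, hηc⟩ := lt_min_iff.mp hηlt
  have hk : 0 < k := hε0.trans_le hεk
  have hlam : 0 < lam := hη0.trans hηlam
  have hc0 : 0 < c := hc ▸ div_pos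
    (by linarith [add_one_lt_exp (by positivity : lam * k ≠ 0)]) (by positivity)
  have hcη : c * η ≤ ε / 2 := by
    have := (lt_div_iff₀ (by positivity : 0 < 2 * c)).mp hηc
    linarith
  -- `ρ ≥ exp (-η ε)`, by the same quadratic bound on the exponential
  have hρ0 : 0 < ρ := by
    have := hc ▸ exp_mul_le_one_add_mul_add_sq hη0 hηlam.le (y := -ε)
      (by rwa [abs_neg, abs_of_pos hε0])
    nlinarith [exp_pos (η * -ε)]
  have hρ1 : ρ < 1 := by rw [hρ]; linarith [mul_pos hη0 hε0]
  have hX : ∀ n, Measurable (X n) := fun n => (hadp n).mono (ℱ.le n) le_rfl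
  have hstep := hρ ▸ condExp_exp_mul_increment_le_of_drift hadp hbdd hdrift hη0 hηlam.le (hc ▸ hcη)
  have hηD : exp (η * k) ≤ D := hD ▸ exp_le_exp.mpr (by gcongr)
  have hmgf := le_add_pow_mul_of_le_mul_add (a := fun n => mgf (X n) μ η) hρ0.le hρ1.ne
    (mgf_succ_le hadp hX0 hbdd hη0.le hρ0.le hηD hstep)
  have hC : D * exp (η * (K - M)) / (1 - ρ) = exp (-η * M) * (D * exp (η * K) / (1 - ρ)) := by
    rw [mul_sub, exp_sub, neg_mul, exp_neg]
    ring
  rw [hC]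
  exact liminf_limsup_bounds_of_mgf_le hX (integrable_exp_mul_of_bounded_increments
    (fun n => (hX n).aestronglyMeasurable) hX0 hbdd hη0.le) hη0.le hρ0.le hρ1 hmgf M

theorem stmt_6
    {Ω : Type*} {m0 : MeasurableSpace Ω} {μ : Measure Ω} [IsProbabilityMeasure μ]
    (ℱ : Filtration ℕ m0) (X : ℕ → Ω → ℝ) (hadp : Adapted ℱ X)
    (x0 : ℝ) (hX0 : ∀ᵐ ω ∂μ, X 0 ω = x0)
    (k ε K : ℝ) (hk : 0 < k) (hε0 : 0 < ε) (hεk : ε ≤ k)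
    (hbdd : ∀ n : ℕ, ∀ᵐ ω ∂μ, |X (n + 1) ω - X n ω| ≤ k)
    (hdrift : ∀ n : ℕ, ∀ᵐ ω ∂μ, K ≤ X n ω →
      (μ[(fun ω' => X (n + 1) ω' - X n ω') | ℱ n]) ω ≤ -ε)
    (lam : ℝ) (hlam : 0 < lam)
    (c η ρ D : ℝ)
    (hc : c = (Real.exp (lam * k) - 1 - lam * k) / lam ^ 2)
    (hη0 : 0 < η) (hηlt : η < min lam (ε / (2 * c)))
    (hρ : ρ = 1 - η * ε / 2)
    (hD : D = Real.exp (lam * k)) :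
    ∀ M : ℝ,
      (1 - D * Real.exp (η * (K - M)) / (1 - ρ) ≤
        Filter.liminf (fun n => (μ {ω | X n ω < M}).toReal) Filter.atTop) ∧
      (Filter.limsup (fun n => (μ {ω | M ≤ X n ω}).toReal) Filter.atTop ≤
        D * Real.exp (η * (K - M)) / (1 - ρ)) :=
  stmt_6_general ℱ X hadp x0 hX0 k ε K hε0 hεk hbdd hdrift lam c η ρ D hc hη0 hηlt hρ hD
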